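/- Let ρ be a probability measure on the set of partitions with at most N parts, and let x_1,…,x_N be nonzero parameters. Define the Schur generating function S_ρ(u_1,…,u_N) = Σ_λ ρ(λ) s_λ(u_1,…,u_N)/s_λ(x_1,…,x_N). Then for any positive integers k and l, applying the operator D_k (with Vandermonde conjugation) l times to S_ρ and evaluating at (u_1,…,u_N) = (x_1,…,x_N) yields E_ρ[(Σ_{i=1}^N (λ_i + N − i)^k)^l]. -/

import Mathlib

open scoped BigOperators

/-- The complete homogeneous symmetric function `h_r` in `N` complex variables. -/
noncomputable def hsym (N : ℕ) (x : Fin N → ℂ) (r : ℕ) : ℂ :=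
  ∑ m : Fin N → Fin (r + 1),
    if (∑ i, (m i : ℕ)) = r then ∏ i, x i ^ (m i : ℕ) else 0

/-- `h_k` for an integer index `k`, equal to `0` for negative `k`. -/
noncomputable def hsymZ (N : ℕ) (x : Fin N → ℂ) (z : ℤ) : ℂ :=
  if z < 0 then 0 else hsym N x z.toNat

/-- The Schur polynomial `s_λ(x_1,…,x_N)` via the Jacobi–Trudi formula. -/
noncomputable def schur (N : ℕ) (lam : Fin N → ℕ) (x : Fin N → ℂ) : ℂ :=
  Matrix.det (Matrix.of fun i j : Fin N =>
    hsymZ N x ((lam i : ℤ) + (j : ℤ) - (i : ℤ)))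

/-- The Vandermonde determinant `V(u) = ∏_{i<j} (u_i − u_j)`. -/
noncomputable def vand (N : ℕ) (u : Fin N → ℂ) : ℂ :=
  ∏ p ∈ Finset.univ.filter (fun p : Fin N × Fin N => p.1 < p.2), (u p.1 - u p.2)

/-- The Euler operator `u_j ∂/∂u_j` acting on functions of `N` complex variables. -/
noncomputable def eulerOp (N : ℕ) (j : Fin N) (f : (Fin N → ℂ) → ℂ) :
    (Fin N → ℂ) → ℂ :=
  fun u => u j * deriv (fun t : ℂ => f (Function.update u j t)) (u j)

/-- The operator `D_k f = V⁻¹ (Σ_j (u_j ∂/∂u_j)^k) (V · f)`. -/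
noncomputable def Dop (N k : ℕ) (f : (Fin N → ℂ) → ℂ) : (Fin N → ℂ) → ℂ :=
  fun u => (vand N u)⁻¹ *
    ∑ j : Fin N, (eulerOp N j)^[k] (fun v => vand N v * f v) u

/-- The Schur generating function `S_ρ(u) = Σ_λ ρ(λ) s_λ(u)/s_λ(x)` of a finitely
supported measure `ρ` on partitions with at most `N` parts. -/
noncomputable def SGF (N : ℕ) (S : Finset (Fin N → ℕ)) (ρ : (Fin N → ℕ) → ℝ)
    (x : Fin N → ℂ) : (Fin N → ℂ) → ℂ :=
  fun u => ∑ lam ∈ S, (ρ lam : ℂ) * schur N lam u / schur N lam x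

/-!
Multiplying a Schur polynomial by the Vandermonde gives the bialternant
`det (u_i ^ (λ_j + N - 1 - j))`: this matrix factors as the Jacobi–Trudi matrix times the
matrix of coefficients of `∏_{i ≠ r} (1 - u_i t)`, because `∏ (1 - u_i t) · ∏ (1 - u_i t)⁻¹ = 1`,
and the case `λ = 0` shows that the latter matrix has determinant `V`. The bialternant is a
signed sum of monomials whose exponent vectors are permutations of `(λ_j + N - 1 - j)_j`, so
`∑_j (u_j ∂_j)^k` multiplies it by `∑_j (λ_j + N - 1 - j)^k`. Hence every `s_λ` is an
eigenfunction of `D_k`, and evaluating the iterate at `u = x` cancels the normalisation `s_λ(x)`.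
-/

open Finset PowerSeries

section GeneratingSeries

variable {R ι : Type*} [CommRing R]

lemma one_sub_C_mul_X_mul_rescale_mk_one (a : R) : (1 - C a * X) * rescale a (mk 1) = 1 := by
  rw [← rescale_X, ← map_one (rescale a), ← map_sub, ← map_mul, mul_comm,
    mk_one_mul_one_sub_eq_one, map_one]

noncomputable def eSeries (u : ι → R) (s : Finset ι) : R⟦X⟧ := ∏ i ∈ s, (1 - C (u i) * X)

-- `rescale a (mk 1)` is the geometric series `(1 - a t)⁻¹`.
noncomputable def hSeries (u : ι → R) (s : Finset ι) : R⟦X⟧ := ∏ i ∈ s, rescale (u i) (mk 1)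

lemma eSeries_mul_hSeries (u : ι → R) (s : Finset ι) : eSeries u s * hSeries u s = 1 := by
  rw [eSeries, hSeries, ← prod_mul_distrib]
  exact prod_eq_one fun i _ => one_sub_C_mul_X_mul_rescale_mk_one (u i)

lemma coeff_eSeries_of_card_lt (u : ι → R) (s : Finset ι) {m : ℕ} (hm : #s < m) :
    coeff m (eSeries u s) = 0 := by
  induction s using Finset.cons_induction generalizing m with
  | empty => rw [eSeries, prod_empty, coeff_one, if_neg (by simp at hm; omega)]
  | cons a s ha ih =>
    rw [card_cons] at hm
    obtain ⟨m, rfl⟩ : ∃ m', m = m' + 1 := ⟨m - 1, by omega⟩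
    rw [eSeries, prod_cons, ← eSeries, sub_mul, one_mul, mul_assoc, map_sub, coeff_C_mul,
      coeff_succ_X_mul, ih (by omega), ih (by omega), mul_zero, sub_zero]

end GeneratingSeries

lemma coeff_hSeries_univ (N : ℕ) (u : Fin N → ℂ) (n : ℕ) :
    coeff n (hSeries u univ) = hsym N u n := by
  classical
  rw [hSeries, coeff_prod, hsym, ← sum_filter]
  have hle {l : Fin N →₀ ℕ} (hl : l ∈ univ.finsuppAntidiag n) (i : Fin N) :
      min (l i) n = l i :=
    min_eq_left <| (mem_finsuppAntidiag.mp hl).1 ▸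
      single_le_sum (fun _ _ => Nat.zero_le _) (mem_univ i)
  symm
  -- `min · n` only serves to land in `Fin (n + 1)`.
  refine sum_nbij' (fun m => Finsupp.equivFunOnFinite.symm fun i => (m i : ℕ))
    (fun l i => ⟨min (l i) n, by omega⟩) ?_ ?_ ?_ ?_ ?_
  · intro m hm
    simpa [mem_finsuppAntidiag] using hm
  · intro l hl
    simpa [hle hl] using (mem_finsuppAntidiag.mp hl).1
  · intro m hm
    exact funext fun i => Fin.ext (min_eq_left (Nat.lt_succ_iff.mp (m i).isLt))
  · intro l hl
    ext i
    simp [hle hl i]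
  · intro m _
    simp [coeff_rescale]

lemma pow_eq_sum_coeff_eSeries_mul_hsymZ (N : ℕ) (u : Fin N → ℂ) (r : Fin N) (n : ℕ) :
    u r ^ n = ∑ m ∈ range N, coeff m (eSeries u (univ.erase r)) * hsymZ N u (n - m) := by
  have hgeom : eSeries u (univ.erase r) * hSeries u univ = rescale (u r) (mk 1) := by
    rw [hSeries, ← mul_prod_erase univ _ (mem_univ r), ← hSeries, mul_left_comm,
      eSeries_mul_hSeries, mul_one]
  have hcard : #(univ.erase r) = N - 1 := by simp
  set F : ℕ → ℂ := fun m => coeff m (eSeries u (univ.erase r)) * hsymZ N u (n - m)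
  calc u r ^ n = ∑ m ∈ range (n + 1), F m := by
        rw [show u r ^ n = coeff n (rescale (u r) (mk 1)) by simp [coeff_rescale], ← hgeom,
          coeff_mul, Nat.sum_antidiagonal_eq_sum_range_succ_mk]
        refine sum_congr rfl fun m hm => ?_
        rw [mem_range] at hm
        simp only [F, hsymZ, coeff_hSeries_univ, if_neg (by omega : ¬((n : ℤ) - m < 0))]
        rw [show ((n : ℤ) - m).toNat = n - m by omega]
    _ = ∑ m ∈ range (N + n + 1), F m := by
        refine sum_subset (by intro m; simp; omega) fun m _ hm => ?_
        simp only [mem_range, not_lt] at hm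
        simp only [F, hsymZ, if_pos (by omega : (n : ℤ) - m < 0), mul_zero]
    _ = ∑ m ∈ range N, F m := by
        refine (sum_subset (by intro m; simp; omega) fun m _ hm => ?_).symm
        simp only [mem_range, not_lt] at hm
        have := r.pos
        simp only [F, coeff_eSeries_of_card_lt u _ (by omega : #(univ.erase r) < m), zero_mul]

def shiftedCoord (N : ℕ) (lam : Fin N → ℕ) (i : Fin N) : ℕ := lam i + (N - 1 - i)

noncomputable def eMatrix (N : ℕ) (u : Fin N → ℂ) : Matrix (Fin N) (Fin N) ℂ :=
  Matrix.of fun r k => coeff (N - 1 - k) (eSeries u (univ.erase r))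

noncomputable def jacobiTrudiMatrix (N : ℕ) (lam : Fin N → ℕ) (u : Fin N → ℂ) :
    Matrix (Fin N) (Fin N) ℂ :=
  Matrix.of fun k j => hsymZ N u (lam j + k - j)

lemma det_jacobiTrudiMatrix (N : ℕ) (lam : Fin N → ℕ) (u : Fin N → ℂ) :
    (jacobiTrudiMatrix N lam u).det = schur N lam u :=
  Matrix.det_transpose _

lemma eMatrix_mul_jacobiTrudiMatrix (N : ℕ) (lam : Fin N → ℕ) (u : Fin N → ℂ) :
    eMatrix N u * jacobiTrudiMatrix N lam u = Matrix.of fun i j => u i ^ shiftedCoord N lam j := by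
  ext r j
  rw [Matrix.mul_apply, Matrix.of_apply, pow_eq_sum_coeff_eSeries_mul_hsymZ, ← sum_range_reflect,
    ← Fin.sum_univ_eq_sum_range (fun k => coeff (N - 1 - k) (eSeries u (univ.erase r)) *
      hsymZ N u (shiftedCoord N lam j - (N - 1 - k : ℕ)))]
  refine sum_congr rfl fun k _ => ?_
  simp only [eMatrix, jacobiTrudiMatrix, Matrix.of_apply, shiftedCoord]
  congr 2
  omega

lemma vand_eq_prod_prod_Ioi (N : ℕ) (u : Fin N → ℂ) :
    vand N u = ∏ i, ∏ j ∈ Ioi i, (u i - u j) := by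
  rw [vand, prod_filter, Fintype.prod_prod_type]
  simp [prod_ite, filter_lt_eq_Ioi]

lemma det_of_pow_sub_one_sub (N : ℕ) (u : Fin N → ℂ) :
    (Matrix.of fun i j : Fin N => u i ^ (N - 1 - j)).det = vand N u := by
  have : (Matrix.of fun i j : Fin N => u i ^ (N - 1 - j)) = Matrix.projVandermonde 1 u := by
    ext i j
    simp only [Matrix.of_apply, Matrix.projVandermonde_apply, Pi.one_apply, one_pow, one_mul,
      Fin.val_rev]
    congr 1
    omega
  simp [this, Matrix.det_projVandermonde, vand_eq_prod_prod_Ioi]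

lemma hsym_zero (N : ℕ) (u : Fin N → ℂ) : hsym N u 0 = 1 := by
  rw [hsym, Fintype.sum_unique (fun m : Fin N → Fin 1 => _)]
  simp

lemma schur_zero (N : ℕ) (u : Fin N → ℂ) : schur N (fun _ => 0) u = 1 := by
  rw [schur, Matrix.det_of_isUpperTriangular]
  · refine prod_eq_one fun i _ => ?_
    simp [hsymZ, hsym_zero]
  · intro i j (hij : (j : ℕ) < i)
    simp only [Matrix.of_apply, hsymZ, if_pos (show ((0 : ℕ) : ℤ) + j - i < 0 by omega)]

lemma det_eMatrix (N : ℕ) (u : Fin N → ℂ) : (eMatrix N u).det = vand N u := by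
  have h := congrArg Matrix.det (eMatrix_mul_jacobiTrudiMatrix N (fun _ => 0) u)
  rw [Matrix.det_mul, det_jacobiTrudiMatrix, schur_zero, mul_one] at h
  simpa [shiftedCoord, det_of_pow_sub_one_sub] using h

lemma det_of_pow_shiftedCoord (N : ℕ) (lam : Fin N → ℕ) (u : Fin N → ℂ) :
    (Matrix.of fun i j : Fin N => u i ^ shiftedCoord N lam j).det = vand N u * schur N lam u := by
  rw [← eMatrix_mul_jacobiTrudiMatrix, Matrix.det_mul, det_eMatrix, det_jacobiTrudiMatrix]

lemma vand_mul_schur (N : ℕ) (lam : Fin N → ℕ) (u : Fin N → ℂ) :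
    vand N u * schur N lam u = ∑ σ : Equiv.Perm (Fin N),
      (Equiv.Perm.sign σ : ℂ) * ∏ i, u i ^ shiftedCoord N lam (σ i) := by
  rw [← det_of_pow_shiftedCoord, ← Matrix.det_transpose, Matrix.det_apply']
  rfl

lemma vand_ne_zero {N : ℕ} {u : Fin N → ℂ} (hu : Function.Injective u) : vand N u ≠ 0 := by
  rw [vand_eq_prod_prod_Ioi]
  exact prod_ne_zero_iff.mpr fun i _ => prod_ne_zero_iff.mpr fun j hj =>
    sub_ne_zero.mpr (hu.ne (mem_Ioi.mp hj).ne)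

section EulerOperator

variable {N : ℕ} {ι : Type*} (F : Finset ι) (a : ι → Fin N → ℕ) (j : Fin N)

lemma eulerOp_sum_monomial (c : ι → ℂ) :
    eulerOp N j (fun u => ∑ s ∈ F, c s * ∏ i, u i ^ a s i)
      = fun u => ∑ s ∈ F, (a s j * c s) * ∏ i, u i ^ a s i := by
  funext u
  have hmono (s : ι) (t : ℂ) :
      ∏ i, Function.update u j t i ^ a s i = t ^ a s j * ∏ i ∈ univ.erase j, u i ^ a s i := by
    rw [← mul_prod_erase univ _ (mem_univ j), Function.update_self]
    congr 1
    exact prod_congr rfl fun i hi => by rw [Function.update_of_ne (ne_of_mem_erase hi)]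
  have hderiv : HasDerivAt (fun t => ∑ s ∈ F, c s * ∏ i, Function.update u j t i ^ a s i)
      (∑ s ∈ F, c s * ((a s j * u j ^ (a s j - 1)) * ∏ i ∈ univ.erase j, u i ^ a s i)) (u j) := by
    simp only [hmono]
    exact HasDerivAt.fun_sum fun s _ => ((hasDerivAt_pow _ _).mul_const _).const_mul _
  rw [eulerOp, hderiv.deriv, mul_sum]
  refine sum_congr rfl fun s _ => ?_
  rw [← mul_prod_erase univ (fun i => u i ^ a s i) (mem_univ j)]
  obtain h | h := eq_or_ne (a s j) 0
  · simp [h]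
  · rw [← mul_pow_sub_one h (u j)]
    ring

lemma eulerOp_iterate_sum_monomial (k : ℕ) (c : ι → ℂ) :
    (eulerOp N j)^[k] (fun u => ∑ s ∈ F, c s * ∏ i, u i ^ a s i)
      = fun u => ∑ s ∈ F, ((a s j : ℂ) ^ k * c s) * ∏ i, u i ^ a s i := by
  induction k generalizing c with
  | zero => simp
  | succ k ih =>
    rw [Function.iterate_succ_apply', ih, eulerOp_sum_monomial]
    funext u
    exact sum_congr rfl fun s _ => by ring

end EulerOperator

noncomputable def shiftedPowerSum (N k : ℕ) (lam : Fin N → ℕ) : ℂ :=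
  ∑ i, (shiftedCoord N lam i : ℂ) ^ k

lemma vand_mul_sum_schur (N : ℕ) (S : Finset (Fin N → ℕ)) (c : (Fin N → ℕ) → ℂ) (u : Fin N → ℂ) :
    vand N u * ∑ lam ∈ S, c lam * schur N lam u =
      ∑ p ∈ S ×ˢ univ, (c p.1 * Equiv.Perm.sign p.2) * ∏ i, u i ^ shiftedCoord N p.1 (p.2 i) := by
  rw [mul_sum, sum_product]
  refine sum_congr rfl fun lam _ => ?_
  rw [mul_left_comm, vand_mul_schur, mul_sum]
  exact sum_congr rfl fun σ _ => by ring

lemma sum_eulerOp_iterate_vand_mul_sum_schur (N k : ℕ) (S : Finset (Fin N → ℕ))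
    (c : (Fin N → ℕ) → ℂ) (u : Fin N → ℂ) :
    ∑ j, (eulerOp N j)^[k] (fun v => vand N v * ∑ lam ∈ S, c lam * schur N lam v) u
      = vand N u * ∑ lam ∈ S, (shiftedPowerSum N k lam * c lam) * schur N lam u := by
  simp only [vand_mul_sum_schur, eulerOp_iterate_sum_monomial]
  rw [sum_comm]
  refine sum_congr rfl fun p _ => ?_
  rw [← sum_mul, ← sum_mul, shiftedPowerSum,
    Equiv.sum_comp p.2 fun i => (shiftedCoord N p.1 i : ℂ) ^ k]
  ring

-- `D_k f` depends on `f` only through `V · f`.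
lemma Dop_congr {N k : ℕ} {f g : (Fin N → ℂ) → ℂ} (h : ∀ v, vand N v ≠ 0 → f v = g v) :
    Dop N k f = Dop N k g := by
  have hVf : (fun v => vand N v * f v) = fun v => vand N v * g v := funext fun v => by
    by_cases hv : vand N v = 0 <;> simp [hv, h]
  unfold Dop
  rw [hVf]

lemma Dop_iterate_sum_schur (N k l : ℕ) (S : Finset (Fin N → ℕ)) (c : (Fin N → ℕ) → ℂ)
    {u : Fin N → ℂ} (hu : vand N u ≠ 0) :
    (Dop N k)^[l] (fun v => ∑ lam ∈ S, c lam * schur N lam v) u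
      = ∑ lam ∈ S, (shiftedPowerSum N k lam ^ l * c lam) * schur N lam u := by
  induction l generalizing u with
  | zero => simp
  | succ l ih =>
    rw [Function.iterate_succ_apply', Dop_congr fun v hv => ih hv, Dop,
      sum_eulerOp_iterate_vand_mul_sum_schur, inv_mul_cancel_left₀ hu]
    exact sum_congr rfl fun lam _ => by ring

theorem Dop_iterate_SGF_eval_general
    (N k l : ℕ)
    (S : Finset (Fin N → ℕ)) (ρ : (Fin N → ℕ) → ℝ)
    (x : Fin N → ℂ) (hxinj : Function.Injective x)
    (hsx : ∀ lam ∈ S, schur N lam x ≠ 0) :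
    (Dop N k)^[l] (SGF N S ρ x) x
      = ∑ lam ∈ S, (ρ lam : ℂ) *
          ((∑ i : Fin N, ((lam i + (N - 1 - (i : ℕ)))^k : ℕ) : ℂ))^l := by
  have hSGF : SGF N S ρ x = fun u => ∑ lam ∈ S, ((ρ lam : ℂ) / schur N lam x) * schur N lam u :=
    funext fun u => sum_congr rfl fun lam _ => mul_div_right_comm _ _ _
  rw [hSGF, Dop_iterate_sum_schur _ _ _ _ _ (vand_ne_zero hxinj)]
  refine sum_congr rfl fun lam hlam => ?_
  field_simp [hsx lam hlam]
  simp [shiftedPowerSum, shiftedCoord, mul_comm]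

/-- applying `D_k` (with Vandermonde conjugation) `l` times to the Schur
generating function of `ρ` and evaluating at `u = x` yields the moment
`E_ρ[(Σ_{i=1}^N (λ_i + N − i)^k)^l]`. -/
theorem Dop_iterate_SGF_eval
    (N k l : ℕ) (hk : 0 < k) (hl : 0 < l)
    (S : Finset (Fin N → ℕ)) (ρ : (Fin N → ℕ) → ℝ)
    (hρ : ∀ lam ∈ S, 0 ≤ ρ lam) (hρ1 : ∑ lam ∈ S, ρ lam = 1)
    (hanti : ∀ lam ∈ S, Antitone lam)
    (x : Fin N → ℂ) (hx0 : ∀ i, x i ≠ 0) (hxinj : Function.Injective x)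
    (hsx : ∀ lam ∈ S, schur N lam x ≠ 0) :
    (Dop N k)^[l] (SGF N S ρ x) x
      = ∑ lam ∈ S, (ρ lam : ℂ) *
          ((∑ i : Fin N, ((lam i + (N - 1 - (i : ℕ)))^k : ℕ) : ℂ))^l :=
  Dop_iterate_SGF_eval_general N k l S ρ x hxinj hsx
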